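/- Let q, ℓ be nonzero real numbers. Then: (i) there exists a unique star structure ★ₘ on the complex q-linked Minkowski algebra M^{ℓ,q} with t₁₁^{★ₘ} = t₁₁, t₁₂^{★ₘ} = t₂₁, t₂₁^{★ₘ} = t₁₂, t₂₂^{★ₘ} = t₂₂, and it fixes the quantum metric: (Q_{ℓ/q})^{★ₘ} = Q_{ℓ/q}; (ii) there exists a unique star structure ★ₗ on the q-linked complex Lorentz algebra L_{q,ℓ} with a^{★ₗ} = d', b^{★ₗ} = −q⁻¹c', c^{★ₗ} = −qb', d^{★ₗ} = a', a'^{★ₗ} = d, b'^{★ₗ} = −q⁻¹c, c'^{★ₗ} = −qb, d'^{★ₗ} = a; (iii) the coaction ρ intertwines these star structures: ρ ∘ ★ₘ = (★ₗ ⊗ ★ₘ) ∘ ρ, where ★ₗ ⊗ ★ₘ denotes the induced conjugate-linear map on L_{q,ℓ} ⊗ M^{ℓ,q}. (Thus the real q-linked Minkowski space is a quantum homogeneous space for the deformed real Lorentz group.) -/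

import Mathlib

/-!
A conjugate-linear antimultiplicative map out of an algebra presented by generators and relations
is determined by its values on the generators, and it exists as soon as the prescribed values
satisfy the starred relations; it is involutive as soon as it is so on the generators. For real
`q` and `ℓ` the prescribed `★ₘ` and `★ₗ` send every defining relation of `M^{ℓ,q}` and of
`L_{q,ℓ}` to a scalar multiple of another defining relation. For the coaction, `ρ ∘ ★ₘ` and
`(★ₗ ⊗ ★ₘ) ∘ ρ` are both conjugate-linear antihomomorphisms, so they agree once they agree on the
`t_{ij}`; there the identity is `★ₘ t_{sr} = t_{rs}`, `★ₗ y_{is} = σ_{si}`, `★ₗ σ_{rj} = y_{jr}`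
followed by exchanging the two summation indices.
-/

noncomputable section

open FreeAlgebra
open scoped TensorProduct

/-- The relations of the q-linked complex Lorentz algebra `L_{q,ℓ}`: generators
`a = ι ℂ 0, b = ι ℂ 1, c = ι ℂ 2, d = ι ℂ 3` and `a' = ι ℂ 4, b' = ι ℂ 5,
c' = ι ℂ 6, d' = ι ℂ 7`, Manin relations with parameter `q` in both sectors, the
link relations, the commutation relations, and the determinant relations. -/
inductive LRel (q ℓ : ℂ) : FreeAlgebra ℂ (Fin 8) → FreeAlgebra ℂ (Fin 8) → Prop
  | ab : LRel q ℓ (ι ℂ 0 * ι ℂ 1) (q⁻¹ • (ι ℂ 1 * ι ℂ 0))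
  | ac : LRel q ℓ (ι ℂ 0 * ι ℂ 2) (q⁻¹ • (ι ℂ 2 * ι ℂ 0))
  | bd : LRel q ℓ (ι ℂ 1 * ι ℂ 3) (q⁻¹ • (ι ℂ 3 * ι ℂ 1))
  | cd : LRel q ℓ (ι ℂ 2 * ι ℂ 3) (q⁻¹ • (ι ℂ 3 * ι ℂ 2))
  | bc : LRel q ℓ (ι ℂ 1 * ι ℂ 2) (ι ℂ 2 * ι ℂ 1)
  | ad : LRel q ℓ (ι ℂ 0 * ι ℂ 3 - ι ℂ 3 * ι ℂ 0) ((q⁻¹ - q) • (ι ℂ 1 * ι ℂ 2))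
  | ab' : LRel q ℓ (ι ℂ 4 * ι ℂ 5) (q⁻¹ • (ι ℂ 5 * ι ℂ 4))
  | ac' : LRel q ℓ (ι ℂ 4 * ι ℂ 6) (q⁻¹ • (ι ℂ 6 * ι ℂ 4))
  | bd' : LRel q ℓ (ι ℂ 5 * ι ℂ 7) (q⁻¹ • (ι ℂ 7 * ι ℂ 5))
  | cd' : LRel q ℓ (ι ℂ 6 * ι ℂ 7) (q⁻¹ • (ι ℂ 7 * ι ℂ 6))
  | bc' : LRel q ℓ (ι ℂ 5 * ι ℂ 6) (ι ℂ 6 * ι ℂ 5)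
  | ad' : LRel q ℓ (ι ℂ 4 * ι ℂ 7 - ι ℂ 7 * ι ℂ 4) ((q⁻¹ - q) • (ι ℂ 5 * ι ℂ 6))
  | link₁ : LRel q ℓ (ι ℂ 5 * ι ℂ 0) (ℓ • (ι ℂ 0 * ι ℂ 5))
  | link₂ : LRel q ℓ (ι ℂ 0 * ι ℂ 6) (ℓ • (ι ℂ 6 * ι ℂ 0))
  | link₃ : LRel q ℓ (ι ℂ 4 * ι ℂ 1) (ℓ • (ι ℂ 1 * ι ℂ 4))
  | link₄ : LRel q ℓ (ι ℂ 1 * ι ℂ 7) (ℓ • (ι ℂ 7 * ι ℂ 1))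
  | link₅ : LRel q ℓ (ι ℂ 2 * ι ℂ 4) (ℓ • (ι ℂ 4 * ι ℂ 2))
  | link₆ : LRel q ℓ (ι ℂ 7 * ι ℂ 2) (ℓ • (ι ℂ 2 * ι ℂ 7))
  | link₇ : LRel q ℓ (ι ℂ 3 * ι ℂ 5) (ℓ • (ι ℂ 5 * ι ℂ 3))
  | link₈ : LRel q ℓ (ι ℂ 6 * ι ℂ 3) (ℓ • (ι ℂ 3 * ι ℂ 6))
  | comm₁ : LRel q ℓ (ι ℂ 0 * ι ℂ 4) (ι ℂ 4 * ι ℂ 0)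
  | comm₂ : LRel q ℓ (ι ℂ 0 * ι ℂ 7) (ι ℂ 7 * ι ℂ 0)
  | comm₃ : LRel q ℓ (ι ℂ 1 * ι ℂ 5) (ι ℂ 5 * ι ℂ 1)
  | comm₄ : LRel q ℓ (ι ℂ 1 * ι ℂ 6) (ι ℂ 6 * ι ℂ 1)
  | comm₅ : LRel q ℓ (ι ℂ 2 * ι ℂ 5) (ι ℂ 5 * ι ℂ 2)
  | comm₆ : LRel q ℓ (ι ℂ 2 * ι ℂ 6) (ι ℂ 6 * ι ℂ 2)
  | comm₇ : LRel q ℓ (ι ℂ 3 * ι ℂ 4) (ι ℂ 4 * ι ℂ 3)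
  | comm₈ : LRel q ℓ (ι ℂ 3 * ι ℂ 7) (ι ℂ 7 * ι ℂ 3)
  | det : LRel q ℓ (ι ℂ 0 * ι ℂ 3 - q⁻¹ • (ι ℂ 1 * ι ℂ 2)) 1
  | det' : LRel q ℓ (ι ℂ 4 * ι ℂ 7 - q⁻¹ • (ι ℂ 5 * ι ℂ 6)) 1

/-- The q-linked complex Lorentz algebra `L_{q,ℓ}`. -/
abbrev LAlg (q ℓ : ℂ) := RingQuot (LRel q ℓ)

/-- The images of the eight generators of `L_{q,ℓ}`. -/
def lgen (q ℓ : ℂ) (i : Fin 8) : LAlg q ℓ :=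
  RingQuot.mkAlgHom ℂ (LRel q ℓ) (ι ℂ i)

/-- The relations of the complex q-linked Minkowski algebra `M^{ℓ,q}`, with
generators `t₁₁ = ι ℂ 0`, `t₁₂ = ι ℂ 1`, `t₂₁ = ι ℂ 2`, `t₂₂ = ι ℂ 3`. -/
inductive MRel (q ℓ : ℂ) : FreeAlgebra ℂ (Fin 4) → FreeAlgebra ℂ (Fin 4) → Prop
  | r₁ : MRel q ℓ (ι ℂ 0 * ι ℂ 1) ((q * ℓ) • (ι ℂ 1 * ι ℂ 0))
  | r₂ : MRel q ℓ (ι ℂ 1 * ι ℂ 3) ((q⁻¹ * ℓ) • (ι ℂ 3 * ι ℂ 1))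
  | r₃ : MRel q ℓ (ι ℂ 0 * ι ℂ 2) ((q⁻¹ * ℓ⁻¹) • (ι ℂ 2 * ι ℂ 0))
  | r₄ : MRel q ℓ (ι ℂ 2 * ι ℂ 3) ((q * ℓ⁻¹) • (ι ℂ 3 * ι ℂ 2))
  | r₅ : MRel q ℓ (ι ℂ 0 * ι ℂ 3) (ι ℂ 3 * ι ℂ 0)
  | r₆ : MRel q ℓ (ι ℂ 1 * ι ℂ 2) (ι ℂ 2 * ι ℂ 1 + (ℓ * (q⁻¹ - q)) • (ι ℂ 0 * ι ℂ 3))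

/-- The complex q-linked Minkowski algebra `M^{ℓ,q}`. -/
abbrev MAlg (q ℓ : ℂ) := RingQuot (MRel q ℓ)

/-- The images of the generators `t₁₁, t₁₂, t₂₁, t₂₂` of `M^{ℓ,q}`. -/
def tgen (q ℓ : ℂ) (i : Fin 4) : MAlg q ℓ :=
  RingQuot.mkAlgHom ℂ (MRel q ℓ) (ι ℂ i)

/-- The matrix `(t_{ij})` of generators of `M^{ℓ,q}`. -/
def tmat (q ℓ : ℂ) : Fin 2 → Fin 2 → MAlg q ℓ :=
  ![![tgen q ℓ 0, tgen q ℓ 1], ![tgen q ℓ 2, tgen q ℓ 3]]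

/-- The quantum metric `Q_{ℓ/q} = t₁₂ t₂₁ − q⁻¹ℓ · t₁₁ t₂₂`. -/
def Qmetric (q ℓ : ℂ) : MAlg q ℓ :=
  tgen q ℓ 1 * tgen q ℓ 2 - (q⁻¹ * ℓ) • (tgen q ℓ 0 * tgen q ℓ 3)

/-- The antichiral matrix `(y_{ij}) = (a' b'; c' d')` of `L_{q,ℓ}`. -/
def ymat (q ℓ : ℂ) : Fin 2 → Fin 2 → LAlg q ℓ :=
  ![![lgen q ℓ 4, lgen q ℓ 5], ![lgen q ℓ 6, lgen q ℓ 7]]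

/-- The entrywise antipode `(σ_{ij}) = (d −qb; −q⁻¹c a)` of the chiral matrix of
`L_{q,ℓ}`. -/
def σmat (q ℓ : ℂ) : Fin 2 → Fin 2 → LAlg q ℓ :=
  ![![lgen q ℓ 3, (-q) • lgen q ℓ 1], ![(-q⁻¹) • lgen q ℓ 2, lgen q ℓ 0]]

/-- `ρ` is the coaction of `L_{q,ℓ}` on `M^{ℓ,q}`:
`ρ(t_{ij}) = Σ_{s,r} y_{is} σ_{rj} ⊗ t_{sr}`. -/
def IsCoaction (q ℓ : ℂ) (ρ : MAlg q ℓ →ₐ[ℂ] (LAlg q ℓ ⊗[ℂ] MAlg q ℓ)) : Prop :=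
  ∀ i j : Fin 2, ρ (tmat q ℓ i j) =
    ∑ s : Fin 2, ∑ r : Fin 2, (ymat q ℓ i s * σmat q ℓ r j) ⊗ₜ[ℂ] tmat q ℓ s r

/-- A star structure on a complex algebra: additive, conjugate-linear,
antimultiplicative, unital, involutive. -/
def IsStar {A : Type*} [Ring A] [Algebra ℂ A] (st : A → A) : Prop :=
  (∀ x y : A, st (x + y) = st x + st y) ∧
  (∀ (z : ℂ) (x : A), st (z • x) = (starRingEnd ℂ) z • st x) ∧
  (∀ x y : A, st (x * y) = st y * st x) ∧
  st 1 = 1 ∧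
  (∀ x : A, st (st x) = x)

/-- The prescribed values of the star structure on the Minkowski generators. -/
def MStarVals (q ℓ : ℂ) (st : MAlg q ℓ → MAlg q ℓ) : Prop :=
  st (tgen q ℓ 0) = tgen q ℓ 0 ∧ st (tgen q ℓ 1) = tgen q ℓ 2 ∧
  st (tgen q ℓ 2) = tgen q ℓ 1 ∧ st (tgen q ℓ 3) = tgen q ℓ 3

/-- The prescribed values of the star structure on the generators of `L_{q,ℓ}`. -/
def LStarVals (q ℓ : ℂ) (st : LAlg q ℓ → LAlg q ℓ) : Prop :=
  st (lgen q ℓ 0) = lgen q ℓ 7 ∧ st (lgen q ℓ 1) = (-q⁻¹) • lgen q ℓ 6 ∧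
  st (lgen q ℓ 2) = (-q) • lgen q ℓ 5 ∧ st (lgen q ℓ 3) = lgen q ℓ 4 ∧
  st (lgen q ℓ 4) = lgen q ℓ 3 ∧ st (lgen q ℓ 5) = (-q⁻¹) • lgen q ℓ 2 ∧
  st (lgen q ℓ 6) = (-q) • lgen q ℓ 1 ∧ st (lgen q ℓ 7) = lgen q ℓ 0

structure IsConjAntiHom {A B : Type*} [Ring A] [Algebra ℂ A] [Ring B] [Algebra ℂ B]
    (f : A → B) : Prop where
  map_add : ∀ x y, f (x + y) = f x + f y
  map_smul : ∀ (z : ℂ) x, f (z • x) = starRingEnd ℂ z • f x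
  map_mul : ∀ x y, f (x * y) = f y * f x
  map_one : f 1 = 1

namespace IsConjAntiHom

variable {A B C : Type*} [Ring A] [Algebra ℂ A] [Ring B] [Algebra ℂ B] [Ring C] [Algebra ℂ C]
  {f : A → B}

theorem map_neg (hf : IsConjAntiHom f) (x : A) : f (-x) = -f x := by
  simpa using hf.map_smul (-1) x

theorem map_sub (hf : IsConjAntiHom f) (x y : A) : f (x - y) = f x - f y := by
  rw [sub_eq_add_neg, hf.map_add, hf.map_neg, sub_eq_add_neg]

theorem map_sum (hf : IsConjAntiHom f) {κ : Type*} (s : Finset κ) (g : κ → A) :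
    f (∑ k ∈ s, g k) = ∑ k ∈ s, f (g k) :=
  _root_.map_sum (AddMonoidHom.mk' f hf.map_add) g s

theorem algHom_comp (hf : IsConjAntiHom f) (φ : B →ₐ[ℂ] C) : IsConjAntiHom (φ ∘ f) where
  map_add x y := by simp [hf.map_add]
  map_smul z x := by simp [hf.map_smul]
  map_mul x y := by simp [hf.map_mul]
  map_one := by simp [hf.map_one]

theorem comp_algHom {g : B → C} (hg : IsConjAntiHom g) (φ : A →ₐ[ℂ] B) :
    IsConjAntiHom (g ∘ φ) where
  map_add x y := by simp [hg.map_add]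
  map_smul z x := by simp [hg.map_smul]
  map_mul x y := by simp [hg.map_mul]
  map_one := by simp [hg.map_one]

theorem exists_tensorProduct {A' B' : Type*} [Ring A'] [Algebra ℂ A'] [Ring B'] [Algebra ℂ B']
    {g : A' → B'} (hf : IsConjAntiHom f) (hg : IsConjAntiHom g) :
    ∃ T : A ⊗[ℂ] A' → B ⊗[ℂ] B', IsConjAntiHom T ∧ ∀ x y, T (x ⊗ₜ y) = f x ⊗ₜ g y := by
  let F : A →+ A' →+ B ⊗[ℂ] B' := AddMonoidHom.mk'
    (fun x => AddMonoidHom.mk' (fun y => f x ⊗ₜ g y) fun y y' => by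
      rw [hg.map_add, TensorProduct.tmul_add])
    fun x x' => by ext y; simp [hf.map_add, TensorProduct.add_tmul]
  let T : A ⊗[ℂ] A' →+ B ⊗[ℂ] B' := TensorProduct.liftAddHom F fun z x y => by
    simp [F, hf.map_smul, hg.map_smul, TensorProduct.smul_tmul]
  have hT : ∀ x y, T (x ⊗ₜ y) = f x ⊗ₜ g y := fun x y => TensorProduct.liftAddHom_tmul _ _ x y
  refine ⟨T, ⟨_root_.map_add T, fun z u => ?_, fun u w => ?_, ?_⟩, hT⟩
  · induction u using TensorProduct.induction_on with
    | zero => simp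
    | tmul x y => rw [TensorProduct.smul_tmul', hT, hT, hf.map_smul, TensorProduct.smul_tmul']
    | add u u' hu hu' => rw [smul_add, _root_.map_add, hu, hu', _root_.map_add, smul_add]
  · induction u using TensorProduct.induction_on with
    | zero => simp
    | tmul x y =>
      induction w using TensorProduct.induction_on with
      | zero => simp
      | tmul x' y' =>
        rw [Algebra.TensorProduct.tmul_mul_tmul, hT, hT, hT, hf.map_mul, hg.map_mul,
          Algebra.TensorProduct.tmul_mul_tmul]
      | add w w' hw hw' => rw [mul_add, _root_.map_add, hw, hw', _root_.map_add, add_mul]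
    | add u u' hu hu' => rw [add_mul, _root_.map_add, hu, hu', _root_.map_add, mul_add]
  · rw [Algebra.TensorProduct.one_def, hT, hf.map_one, hg.map_one, Algebra.TensorProduct.one_def]

end IsConjAntiHom

theorem IsStar.isConjAntiHom {A : Type*} [Ring A] [Algebra ℂ A] {st : A → A} (h : IsStar st) :
    IsConjAntiHom st :=
  ⟨h.1, h.2.1, h.2.2.1, h.2.2.2.1⟩

/-- `Aᵐᵒᵖ` with `ℂ` acting through complex conjugation, so that conjugate-linear
antihomomorphisms out of a `ℂ`-algebra are the `ℂ`-algebra homomorphisms into `ConjOpp A`. -/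
def ConjOpp (A : Type*) : Type _ := Aᵐᵒᵖ

namespace ConjOpp

variable {A B : Type*} [Ring A] [Algebra ℂ A] [Ring B] [Algebra ℂ B]

instance : Ring (ConjOpp A) := inferInstanceAs (Ring Aᵐᵒᵖ)

instance : Algebra ℂ (ConjOpp A) := Algebra.compHom Aᵐᵒᵖ (starRingEnd ℂ)

def op (x : A) : ConjOpp A := MulOpposite.op x

def unop (x : ConjOpp A) : A := MulOpposite.unop (α := A) x

theorem isConjAntiHom_unop_comp (φ : B →ₐ[ℂ] ConjOpp A) : IsConjAntiHom (unop ∘ φ) where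
  map_add x y := by simp only [Function.comp_apply, _root_.map_add]; rfl
  map_smul z x := by simp only [Function.comp_apply, _root_.map_smul]; rfl
  map_mul x y := by simp only [Function.comp_apply, _root_.map_mul]; rfl
  map_one := by simp only [Function.comp_apply, _root_.map_one]; rfl

end ConjOpp

section Presentation

variable {X B : Type*} [Ring B] [Algebra ℂ B] {Rel : FreeAlgebra ℂ X → FreeAlgebra ℂ X → Prop}

def freeConjLift (v : X → B) : FreeAlgebra ℂ X → B :=
  ConjOpp.unop ∘ FreeAlgebra.lift ℂ (ConjOpp.op ∘ v)

theorem isConjAntiHom_freeConjLift (v : X → B) : IsConjAntiHom (freeConjLift v) :=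
  ConjOpp.isConjAntiHom_unop_comp _

@[simp]
theorem freeConjLift_ι (v : X → B) (i : X) : freeConjLift v (ι ℂ i) = v i := by
  simp [freeConjLift]; rfl

def ringQuotConjLift (v : X → B) (h : ∀ ⦃x y⦄, Rel x y → freeConjLift v x = freeConjLift v y) :
    RingQuot Rel → B :=
  ConjOpp.unop ∘ RingQuot.liftAlgHom ℂ ⟨FreeAlgebra.lift ℂ (ConjOpp.op ∘ v), fun _ _ hxy =>
    congrArg ConjOpp.op (h hxy)⟩

theorem isConjAntiHom_ringQuotConjLift (v : X → B)
    (h : ∀ ⦃x y⦄, Rel x y → freeConjLift v x = freeConjLift v y) :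
    IsConjAntiHom (ringQuotConjLift v h) :=
  ConjOpp.isConjAntiHom_unop_comp _

@[simp]
theorem ringQuotConjLift_mkAlgHom (v : X → B)
    (h : ∀ ⦃x y⦄, Rel x y → freeConjLift v x = freeConjLift v y) (x : FreeAlgebra ℂ X) :
    ringQuotConjLift v h (RingQuot.mkAlgHom ℂ Rel x) = freeConjLift v x :=
  congrArg ConjOpp.unop (RingQuot.liftAlgHom_mkAlgHom_apply _ _ _ _)

theorem IsConjAntiHom.ringQuot_ext {f g : RingQuot Rel → B} (hf : IsConjAntiHom f)
    (hg : IsConjAntiHom g)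
    (h : ∀ i, f (RingQuot.mkAlgHom ℂ Rel (ι ℂ i)) = g (RingQuot.mkAlgHom ℂ Rel (ι ℂ i))) :
    f = g := by
  funext x
  obtain ⟨x, rfl⟩ := RingQuot.mkAlgHom_surjective ℂ Rel x
  induction x using FreeAlgebra.induction with
  | grade0 z =>
    rw [AlgHom.commutes, Algebra.algebraMap_eq_smul_one, hf.map_smul, hg.map_smul, hf.map_one,
      hg.map_one]
  | grade1 i => exact h i
  | mul x y hx hy => rw [_root_.map_mul, hf.map_mul, hg.map_mul, hx, hy]
  | add x y hx hy => rw [_root_.map_add, hf.map_add, hg.map_add, hx, hy]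

theorem IsConjAntiHom.ringQuot_apply_apply {f : RingQuot Rel → RingQuot Rel}
    (hf : IsConjAntiHom f)
    (h : ∀ i, f (f (RingQuot.mkAlgHom ℂ Rel (ι ℂ i))) = RingQuot.mkAlgHom ℂ Rel (ι ℂ i))
    (x : RingQuot Rel) : f (f x) = x := by
  obtain ⟨x, rfl⟩ := RingQuot.mkAlgHom_surjective ℂ Rel x
  induction x using FreeAlgebra.induction with
  | grade0 z => simp [Algebra.algebraMap_eq_smul_one, hf.map_smul, hf.map_one]
  | grade1 i => exact h i
  | mul x y hx hy => rw [_root_.map_mul, hf.map_mul, hf.map_mul, hx, hy]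
  | add x y hx hy => rw [_root_.map_add, hf.map_add, hf.map_add, hx, hy]

theorem existsUnique_isStar_ringQuot (v : X → RingQuot Rel)
    (h : ∀ ⦃x y⦄, Rel x y → freeConjLift v x = freeConjLift v y)
    (hv : ∀ i, ringQuotConjLift v h (v i) = RingQuot.mkAlgHom ℂ Rel (ι ℂ i)) :
    ∃! st : RingQuot Rel → RingQuot Rel,
      IsStar st ∧ ∀ i, st (RingQuot.mkAlgHom ℂ Rel (ι ℂ i)) = v i := by
  have hst := isConjAntiHom_ringQuotConjLift v h
  refine ⟨ringQuotConjLift v h, ⟨⟨hst.map_add, hst.map_smul, hst.map_mul, hst.map_one,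
    hst.ringQuot_apply_apply fun i => by simp [hv]⟩, fun i => by simp⟩, ?_⟩
  rintro st ⟨hstar, hgen⟩
  exact hstar.isConjAntiHom.ringQuot_ext hst fun i => by simp [hgen]

end Presentation

section Minkowski

theorem tgen_normalOrder (q ℓ : ℂ) :
    tgen q ℓ 0 * tgen q ℓ 1 = (q * ℓ) • (tgen q ℓ 1 * tgen q ℓ 0) ∧
    tgen q ℓ 1 * tgen q ℓ 3 = (q⁻¹ * ℓ) • (tgen q ℓ 3 * tgen q ℓ 1) ∧
    tgen q ℓ 0 * tgen q ℓ 2 = (q⁻¹ * ℓ⁻¹) • (tgen q ℓ 2 * tgen q ℓ 0) ∧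
    tgen q ℓ 2 * tgen q ℓ 3 = (q * ℓ⁻¹) • (tgen q ℓ 3 * tgen q ℓ 2) ∧
    tgen q ℓ 0 * tgen q ℓ 3 = tgen q ℓ 3 * tgen q ℓ 0 ∧
    tgen q ℓ 1 * tgen q ℓ 2 =
      tgen q ℓ 2 * tgen q ℓ 1 + (ℓ * (q⁻¹ - q)) • (tgen q ℓ 0 * tgen q ℓ 3) := by
  simp only [tgen, ← map_mul, ← map_smul, ← map_add]
  and_intros <;> exact RingQuot.mkAlgHom_rel ℂ (by constructor)

def tStarGen (q ℓ : ℂ) : Fin 4 → MAlg q ℓ := ![tgen q ℓ 0, tgen q ℓ 2, tgen q ℓ 1, tgen q ℓ 3]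

theorem MStarVals.apply_tmat {q ℓ : ℂ} {st : MAlg q ℓ → MAlg q ℓ} (h : MStarVals q ℓ st)
    (s r : Fin 2) : st (tmat q ℓ s r) = tmat q ℓ r s := by
  obtain ⟨h₀, h₁, h₂, h₃⟩ := h
  fin_cases s <;> fin_cases r <;> assumption

variable (q ℓ : ℝ)

/- `tgen_normalOrder` (like `lgen_normalOrder_swap` and `lgen_normalOrder_det` below) rewrites
every product of two distinct generators in exactly one direction, so the image of each relation
can be checked by comparing normal forms. -/
theorem freeConjLift_tStarGen_rel (hq : q ≠ 0) (hℓ : ℓ ≠ 0) ⦃x y : FreeAlgebra ℂ (Fin 4)⦄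
    (h : MRel q ℓ x y) : freeConjLift (tStarGen q ℓ) x = freeConjLift (tStarGen q ℓ) y := by
  have hq' : (q : ℂ) ≠ 0 := by exact_mod_cast hq
  have hℓ' : (ℓ : ℂ) ≠ 0 := by exact_mod_cast hℓ
  have hf := isConjAntiHom_freeConjLift (tStarGen q ℓ)
  cases h <;>
    simp only [hf.map_mul, hf.map_smul, hf.map_add, freeConjLift_ι] <;>
    simp only [tStarGen, Matrix.cons_val, tgen_normalOrder, smul_smul, map_mul, map_inv₀, map_sub,
      Complex.conj_ofReal] <;>
    match_scalars <;> field_simp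

theorem mStarVals_iff (st : MAlg q ℓ → MAlg q ℓ) :
    MStarVals q ℓ st ↔ ∀ i, st (RingQuot.mkAlgHom ℂ (MRel q ℓ) (ι ℂ i)) = tStarGen q ℓ i := by
  simp [MStarVals, Fin.forall_fin_succ, tStarGen, tgen]

theorem existsUnique_mStar (hq : q ≠ 0) (hℓ : ℓ ≠ 0) :
    ∃! st : MAlg q ℓ → MAlg q ℓ, IsStar st ∧ MStarVals q ℓ st := by
  simp only [mStarVals_iff]
  refine existsUnique_isStar_ringQuot _ (freeConjLift_tStarGen_rel q ℓ hq hℓ) fun i => ?_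
  fin_cases i <;> simp [tStarGen, tgen]

variable {q ℓ} in
theorem MStarVals.apply_Qmetric {st : MAlg q ℓ → MAlg q ℓ} (hst : IsStar st)
    (h : MStarVals q ℓ st) : st (Qmetric q ℓ) = Qmetric q ℓ := by
  have hf := hst.isConjAntiHom
  obtain ⟨h₀, h₁, h₂, h₃⟩ := h
  simp only [Qmetric, hf.map_sub, hf.map_mul, hf.map_smul, h₀, h₁, h₂, h₃, map_mul, map_inv₀,
    Complex.conj_ofReal]
  simp only [tgen_normalOrder]

end Minkowski

section Lorentz

theorem lgen_normalOrder_swap (q ℓ : ℂ) :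
    lgen q ℓ 0 * lgen q ℓ 1 = q⁻¹ • (lgen q ℓ 1 * lgen q ℓ 0) ∧
    lgen q ℓ 0 * lgen q ℓ 2 = q⁻¹ • (lgen q ℓ 2 * lgen q ℓ 0) ∧
    lgen q ℓ 1 * lgen q ℓ 3 = q⁻¹ • (lgen q ℓ 3 * lgen q ℓ 1) ∧
    lgen q ℓ 2 * lgen q ℓ 3 = q⁻¹ • (lgen q ℓ 3 * lgen q ℓ 2) ∧
    lgen q ℓ 1 * lgen q ℓ 2 = lgen q ℓ 2 * lgen q ℓ 1 ∧
    lgen q ℓ 4 * lgen q ℓ 5 = q⁻¹ • (lgen q ℓ 5 * lgen q ℓ 4) ∧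
    lgen q ℓ 4 * lgen q ℓ 6 = q⁻¹ • (lgen q ℓ 6 * lgen q ℓ 4) ∧
    lgen q ℓ 5 * lgen q ℓ 7 = q⁻¹ • (lgen q ℓ 7 * lgen q ℓ 5) ∧
    lgen q ℓ 6 * lgen q ℓ 7 = q⁻¹ • (lgen q ℓ 7 * lgen q ℓ 6) ∧
    lgen q ℓ 5 * lgen q ℓ 6 = lgen q ℓ 6 * lgen q ℓ 5 ∧
    lgen q ℓ 5 * lgen q ℓ 0 = ℓ • (lgen q ℓ 0 * lgen q ℓ 5) ∧
    lgen q ℓ 0 * lgen q ℓ 6 = ℓ • (lgen q ℓ 6 * lgen q ℓ 0) ∧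
    lgen q ℓ 4 * lgen q ℓ 1 = ℓ • (lgen q ℓ 1 * lgen q ℓ 4) ∧
    lgen q ℓ 1 * lgen q ℓ 7 = ℓ • (lgen q ℓ 7 * lgen q ℓ 1) ∧
    lgen q ℓ 2 * lgen q ℓ 4 = ℓ • (lgen q ℓ 4 * lgen q ℓ 2) ∧
    lgen q ℓ 7 * lgen q ℓ 2 = ℓ • (lgen q ℓ 2 * lgen q ℓ 7) ∧
    lgen q ℓ 3 * lgen q ℓ 5 = ℓ • (lgen q ℓ 5 * lgen q ℓ 3) ∧
    lgen q ℓ 6 * lgen q ℓ 3 = ℓ • (lgen q ℓ 3 * lgen q ℓ 6) ∧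
    lgen q ℓ 0 * lgen q ℓ 4 = lgen q ℓ 4 * lgen q ℓ 0 ∧
    lgen q ℓ 0 * lgen q ℓ 7 = lgen q ℓ 7 * lgen q ℓ 0 ∧
    lgen q ℓ 1 * lgen q ℓ 5 = lgen q ℓ 5 * lgen q ℓ 1 ∧
    lgen q ℓ 1 * lgen q ℓ 6 = lgen q ℓ 6 * lgen q ℓ 1 ∧
    lgen q ℓ 2 * lgen q ℓ 5 = lgen q ℓ 5 * lgen q ℓ 2 ∧
    lgen q ℓ 2 * lgen q ℓ 6 = lgen q ℓ 6 * lgen q ℓ 2 ∧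
    lgen q ℓ 3 * lgen q ℓ 4 = lgen q ℓ 4 * lgen q ℓ 3 ∧
    lgen q ℓ 3 * lgen q ℓ 7 = lgen q ℓ 7 * lgen q ℓ 3 := by
  simp only [lgen, ← map_mul, ← map_smul]
  and_intros <;> exact RingQuot.mkAlgHom_rel ℂ (by constructor)

theorem normalOrder_of_quantumDet {A : Type*} [Ring A] [Algebra ℂ A] {q : ℂ} {a b c d : A}
    (hcomm : a * d - d * a = (q⁻¹ - q) • (b * c)) (hdet : a * d - q⁻¹ • (b * c) = 1) :
    a * d = 1 + q⁻¹ • (b * c) ∧ d * a = 1 + q • (b * c) := by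
  have had : a * d = 1 + q⁻¹ • (b * c) := by rw [← hdet]; abel
  refine ⟨had, ?_⟩
  calc d * a = a * d - (a * d - d * a) := by abel
    _ = 1 + q • (b * c) := by rw [hcomm, had]; module

theorem lgen_normalOrder_det (q ℓ : ℂ) :
    lgen q ℓ 0 * lgen q ℓ 3 = 1 + q⁻¹ • (lgen q ℓ 1 * lgen q ℓ 2) ∧
    lgen q ℓ 3 * lgen q ℓ 0 = 1 + q • (lgen q ℓ 1 * lgen q ℓ 2) ∧
    lgen q ℓ 4 * lgen q ℓ 7 = 1 + q⁻¹ • (lgen q ℓ 5 * lgen q ℓ 6) ∧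
    lgen q ℓ 7 * lgen q ℓ 4 = 1 + q • (lgen q ℓ 5 * lgen q ℓ 6) := by
  have ad := RingQuot.mkAlgHom_rel ℂ (LRel.ad (q := q) (ℓ := ℓ))
  have det := RingQuot.mkAlgHom_rel ℂ (LRel.det (q := q) (ℓ := ℓ))
  have ad' := RingQuot.mkAlgHom_rel ℂ (LRel.ad' (q := q) (ℓ := ℓ))
  have det' := RingQuot.mkAlgHom_rel ℂ (LRel.det' (q := q) (ℓ := ℓ))
  simp only [map_sub, map_mul, map_smul, map_one] at ad det ad' det'
  obtain ⟨h₁, h₂⟩ := normalOrder_of_quantumDet ad det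
  obtain ⟨h₃, h₄⟩ := normalOrder_of_quantumDet ad' det'
  exact ⟨h₁, h₂, h₃, h₄⟩

def lStarGen (q ℓ : ℂ) : Fin 8 → LAlg q ℓ :=
  ![lgen q ℓ 7, (-q⁻¹) • lgen q ℓ 6, (-q) • lgen q ℓ 5, lgen q ℓ 4,
    lgen q ℓ 3, (-q⁻¹) • lgen q ℓ 2, (-q) • lgen q ℓ 1, lgen q ℓ 0]

theorem LStarVals.apply_ymat {q ℓ : ℂ} {st : LAlg q ℓ → LAlg q ℓ} (h : LStarVals q ℓ st)
    (i s : Fin 2) : st (ymat q ℓ i s) = σmat q ℓ s i := by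
  obtain ⟨-, -, -, -, h₄, h₅, h₆, h₇⟩ := h
  fin_cases i <;> fin_cases s <;> assumption

variable (q ℓ : ℝ)

theorem freeConjLift_lStarGen_rel (hq : q ≠ 0) ⦃x y : FreeAlgebra ℂ (Fin 8)⦄
    (h : LRel q ℓ x y) : freeConjLift (lStarGen q ℓ) x = freeConjLift (lStarGen q ℓ) y := by
  have hq' : (q : ℂ) ≠ 0 := by exact_mod_cast hq
  have hf := isConjAntiHom_freeConjLift (lStarGen q ℓ)
  cases h <;>
    simp only [hf.map_mul, hf.map_smul, hf.map_sub, hf.map_one, freeConjLift_ι] <;>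
    simp only [lStarGen, Matrix.cons_val, smul_mul_assoc, mul_smul_comm, smul_smul,
      lgen_normalOrder_swap, lgen_normalOrder_det, map_inv₀, map_sub,
      Complex.conj_ofReal] <;>
    match_scalars <;> field_simp <;> ring

theorem lStarVals_iff (st : LAlg q ℓ → LAlg q ℓ) :
    LStarVals q ℓ st ↔ ∀ i, st (RingQuot.mkAlgHom ℂ (LRel q ℓ) (ι ℂ i)) = lStarGen q ℓ i := by
  simp [LStarVals, Fin.forall_fin_succ, lStarGen, lgen]

theorem existsUnique_lStar (hq : q ≠ 0) :
    ∃! st : LAlg q ℓ → LAlg q ℓ, IsStar st ∧ LStarVals q ℓ st := by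
  have hq' : (q : ℂ) ≠ 0 := by exact_mod_cast hq
  simp only [lStarVals_iff]
  refine existsUnique_isStar_ringQuot _ (freeConjLift_lStarGen_rel q ℓ hq) fun i => ?_
  set st := ringQuotConjLift _ (freeConjLift_lStarGen_rel q ℓ hq)
  have hf : IsConjAntiHom st := isConjAntiHom_ringQuotConjLift _ _
  have hgen (k : Fin 8) : st (lgen q ℓ k) = lStarGen q ℓ k :=
    (ringQuotConjLift_mkAlgHom _ _ _).trans (freeConjLift_ι _ _)
  fin_cases i <;> simp [lStarGen, hf.map_smul, hgen, smul_smul, hq'] <;> rfl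

variable {q ℓ} in
theorem LStarVals.apply_σmat {st : LAlg q ℓ → LAlg q ℓ} (hst : IsConjAntiHom st)
    (h : LStarVals q ℓ st) (hq : q ≠ 0) (r j : Fin 2) : st (σmat q ℓ r j) = ymat q ℓ j r := by
  have hq' : (q : ℂ) ≠ 0 := by exact_mod_cast hq
  obtain ⟨h₀, h₁, h₂, h₃, -⟩ := h
  fin_cases r <;> fin_cases j <;>
    simp [σmat, ymat, hst.map_smul, h₀, h₁, h₂, h₃, smul_smul, hq']

end Lorentz

theorem IsCoaction.comp_star_eq {q ℓ : ℝ} (hq : q ≠ 0) {stM : MAlg q ℓ → MAlg q ℓ}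
    {stL : LAlg q ℓ → LAlg q ℓ} {ρ : MAlg q ℓ →ₐ[ℂ] LAlg q ℓ ⊗[ℂ] MAlg q ℓ}
    {T : LAlg q ℓ ⊗[ℂ] MAlg q ℓ → LAlg q ℓ ⊗[ℂ] MAlg q ℓ} (hρ : IsCoaction q ℓ ρ)
    (hM : IsConjAntiHom stM) (hMv : MStarVals q ℓ stM) (hL : IsConjAntiHom stL)
    (hLv : LStarVals q ℓ stL) (hT : IsConjAntiHom T)
    (hTtmul : ∀ x y, T (x ⊗ₜ y) = stL x ⊗ₜ stM y) :
    ρ ∘ stM = T ∘ ρ := by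
  refine (hM.algHom_comp ρ).ringQuot_ext (hT.comp_algHom ρ) ?_
  suffices h : ∀ i j, ρ (stM (tmat q ℓ i j)) = T (ρ (tmat q ℓ i j)) by
    intro k
    fin_cases k
    exacts [h 0 0, h 0 1, h 1 0, h 1 1]
  intro i j
  calc ρ (stM (tmat q ℓ i j))
      = ∑ s, ∑ r, (ymat q ℓ j s * σmat q ℓ r i) ⊗ₜ tmat q ℓ s r := by rw [hMv.apply_tmat, hρ]
    _ = ∑ r, ∑ s, (ymat q ℓ j s * σmat q ℓ r i) ⊗ₜ tmat q ℓ s r := Finset.sum_comm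
    _ = T (ρ (tmat q ℓ i j)) := by
      simp only [hρ i j, hT.map_sum, hTtmul, hL.map_mul, hMv.apply_tmat, hLv.apply_ymat,
        hLv.apply_σmat hL hq]

/-- For nonzero real `q, ℓ`: (i) there is a unique star structure `★ₘ` on `M^{ℓ,q}` with
`t₁₁^★ = t₁₁`, `t₁₂^★ = t₂₁`, `t₂₁^★ = t₁₂`, `t₂₂^★ = t₂₂`, and it fixes the quantum
metric `Q_{ℓ/q}`; (ii) there is a unique star structure `★ₗ` on `L_{q,ℓ}` with the
Lorentzian values; (iii) the coaction `ρ` intertwines them: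
`ρ ∘ ★ₘ = (★ₗ ⊗ ★ₘ) ∘ ρ`. -/
theorem minkowski_real_form (q ℓ : ℝ) (hq : q ≠ 0) (hℓ : ℓ ≠ 0) :
    (∃! st : MAlg ((q : ℂ)) ((ℓ : ℂ)) → MAlg ((q : ℂ)) ((ℓ : ℂ)), IsStar st ∧ MStarVals ((q : ℂ)) ((ℓ : ℂ)) st) ∧
    (∀ st : MAlg ((q : ℂ)) ((ℓ : ℂ)) → MAlg ((q : ℂ)) ((ℓ : ℂ)),
      IsStar st ∧ MStarVals ((q : ℂ)) ((ℓ : ℂ)) st →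
        st (Qmetric ((q : ℂ)) ((ℓ : ℂ))) = Qmetric ((q : ℂ)) ((ℓ : ℂ))) ∧
    (∃! st : LAlg ((q : ℂ)) ((ℓ : ℂ)) → LAlg ((q : ℂ)) ((ℓ : ℂ)), IsStar st ∧ LStarVals ((q : ℂ)) ((ℓ : ℂ)) st) ∧
    (∀ (stM : MAlg ((q : ℂ)) ((ℓ : ℂ)) → MAlg ((q : ℂ)) ((ℓ : ℂ))) (stL : LAlg ((q : ℂ)) ((ℓ : ℂ)) → LAlg ((q : ℂ)) ((ℓ : ℂ)))
        (ρ : MAlg ((q : ℂ)) ((ℓ : ℂ)) →ₐ[ℂ] (LAlg ((q : ℂ)) ((ℓ : ℂ)) ⊗[ℂ] MAlg ((q : ℂ)) ((ℓ : ℂ)))),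
      IsStar stM → MStarVals ((q : ℂ)) ((ℓ : ℂ)) stM → IsStar stL → LStarVals ((q : ℂ)) ((ℓ : ℂ)) stL →
      IsCoaction ((q : ℂ)) ((ℓ : ℂ)) ρ →
        ∃ T : (LAlg ((q : ℂ)) ((ℓ : ℂ)) ⊗[ℂ] MAlg ((q : ℂ)) ((ℓ : ℂ))) → (LAlg ((q : ℂ)) ((ℓ : ℂ)) ⊗[ℂ] MAlg ((q : ℂ)) ((ℓ : ℂ))),
          (∀ u v, T (u + v) = T u + T v) ∧
          (∀ (x : LAlg ((q : ℂ)) ((ℓ : ℂ))) (y : MAlg ((q : ℂ)) ((ℓ : ℂ))),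
            T (x ⊗ₜ[ℂ] y) = stL x ⊗ₜ[ℂ] stM y) ∧
          (∀ x : MAlg ((q : ℂ)) ((ℓ : ℂ)), ρ (stM x) = T (ρ x))) := by
  refine ⟨existsUnique_mStar q ℓ hq hℓ, fun st h => h.2.apply_Qmetric h.1, existsUnique_lStar q ℓ hq,
    fun stM stL ρ hM hMv hL hLv hρ => ?_⟩
  obtain ⟨T, hT, hTtmul⟩ := hL.isConjAntiHom.exists_tensorProduct hM.isConjAntiHom
  exact ⟨T, hT.map_add, hTtmul,
    congrFun (hρ.comp_star_eq hq hM.isConjAntiHom hMv hL.isConjAntiHom hLv hT hTtmul)⟩
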